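/- Let n ≥ 3 and let I be a nonempty proper nested subset of [n]. If D_I = {δ_1, δ_2, δ_4} (i.e. exactly δ_1, δ_2 and δ_4 among the four diagonals are proper), then one of the following holds: (a) there is 1 ≤ r ≤ ℓ−2 with d_r < u_m < d_{r+1} and I = {d ∈ D : d > d_r} ∪ {u_m}; (b) there is 1 < r < ℓ such that γ = d_r, b(I) = d_{r+1}, and I = {d_r} ∪ M for some nonempty M ⊆ {u ∈ U : d_r < u < d_{r+1}}; (c) γ = 1, b(I) = d_2, and I = {1} ∪ M for some nonempty M ⊆ {u ∈ U : u < d_2} with max M ≠ u_1 (i.e. u_1 < max M). -/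

import Mathlib

open Finset

attribute [local instance] Classical.propDecidable

namespace AssocPaper

/-- `x` and `y` are consecutive elements of the finite set `S`. -/
def ConsecIn (S : Finset ℕ) (x y : ℕ) : Prop :=
  x ∈ S ∧ y ∈ S ∧ x < y ∧ ∀ z ∈ S, ¬ (x < z ∧ z < y)

/-- `D̄ = D ∪ {0, n+1}`. -/
def Dbar (n : ℕ) (D : Finset ℕ) : Finset ℕ := insert 0 (insert (n + 1) D)

/-- The boundary edges of the `c`-labeled `(n+2)`-gon, given by endpoints `x < y`:
pairs of consecutive elements of `D̄`; if `U ≠ ∅` also `{0, min U}`, `{max U, n+1}` and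
pairs of consecutive elements of `U`; if `U = ∅` also `{0, n+1}`. -/
def IsBoundary (n : ℕ) (D U : Finset ℕ) (x y : ℕ) : Prop :=
  ConsecIn (Dbar n D) x y
    ∨ (U.Nonempty ∧
        ((x = 0 ∧ y ∈ U ∧ ∀ u ∈ U, y ≤ u)
          ∨ (y = n + 1 ∧ x ∈ U ∧ ∀ u ∈ U, u ≤ x)
          ∨ ConsecIn U x y))
    ∨ (U = ∅ ∧ x = 0 ∧ y = n + 1)

/-- `{x, y}` (with `x < y ≤ n+1`) is a proper diagonal: a diagonal of the
`(n+2)`-gon which is not a boundary edge. -/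
def IsProper (n : ℕ) (D U : Finset ℕ) (x y : ℕ) : Prop :=
  x < y ∧ y ≤ n + 1 ∧ ¬ IsBoundary n D U x y

/-- The set `R_δ` for a proper diagonal `δ = {x,y}` with `x < y`. -/
noncomputable def Rdiag (n : ℕ) (D U : Finset ℕ) (x y : ℕ) : Finset ℕ :=
  if x ∈ U then
    (if y ∈ U then (D ∪ U.filter fun u => u ≤ x) ∪ U.filter fun u => y ≤ u
     else D.filter (fun d => d < y) ∪ U.filter fun u => u ≤ x)
  else
    (if y ∈ U then D.filter (fun d => x < d) ∪ U.filter fun u => y ≤ u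
     else D.filter fun d => x < d ∧ d < y)

/-- The extension of `R` to non-proper and degenerate diagonals `δ = {x,y}`, `x ≤ y`:
`R_δ = [n]` if `U = ∅` and `δ = {0,n+1}`; for other non-proper or degenerate `δ`,
`R_δ = ∅` if `x,y ∈ D̄` and `R_δ = [n]` otherwise. -/
noncomputable def Rext (n : ℕ) (D U : Finset ℕ) (x y : ℕ) : Finset ℕ :=
  if IsProper n D U x y then Rdiag n D U x y
  else if U = ∅ ∧ x = 0 ∧ y = n + 1 then Finset.Icc 1 n
  else if x ∈ U ∨ y ∈ U then Finset.Icc 1 n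
  else ∅

/-- The extension of the right-hand sides `z_{R_δ}` to non-proper and degenerate
diagonals, given the values `w` on proper diagonals and the value `zn = z_{[n]}`. -/
noncomputable def zext (n : ℕ) (D U : Finset ℕ) (w : ℕ × ℕ → ℝ) (zn : ℝ) (x y : ℕ) : ℝ :=
  if IsProper n D U x y then w (x, y)
  else if U = ∅ ∧ x = 0 ∧ y = n + 1 then zn
  else if x ∈ U ∨ y ∈ U then zn
  else 0

/-- `a(I)`: the largest element of `D ∪ {0}` smaller than `min I`. -/
noncomputable def aI (D I : Finset ℕ) : ℕ :=
  ((insert 0 D).filter fun e => ∀ i ∈ I, e < i).sup id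

/-- `b(I)`: the smallest element of `D ∪ {n+1}` larger than `max I`. -/
noncomputable def bI (n : ℕ) (D I : Finset ℕ) : ℕ :=
  sInf {e : ℕ | e ∈ insert (n + 1) D ∧ ∀ i ∈ I, i < e}

/-- The minimum element `γ` of `I` (junk value for `I = ∅`). -/
noncomputable def minEl (I : Finset ℕ) : ℕ := sInf {i : ℕ | i ∈ I}

/-- The maximum element `Γ` of `I` (junk value `0` for `I = ∅`). -/
noncomputable def maxEl (I : Finset ℕ) : ℕ := I.sup id

/-- A nonempty `I ⊆ [n]` is nested if every `d ∈ D` with `a(I) < d < b(I)` lies in `I`. -/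
def IsNested (n : ℕ) (D I : Finset ℕ) : Prop :=
  I.Nonempty ∧ I ⊆ Finset.Icc 1 n ∧
    ∀ d ∈ D, aI D I < d → d < bI n D I → d ∈ I

/-- The nested components of `I`: the inclusion-maximal nested subsets of `I`. -/
noncomputable def nestedComponents (n : ℕ) (D I : Finset ℕ) : Finset (Finset ℕ) :=
  I.powerset.filter fun J =>
    IsNested n D J ∧ ∀ K ∈ I.powerset, IsNested n D K → J ⊆ K → J = K

/-- `v(I)`: the number of nested components of `I`. -/
noncomputable def vI (n : ℕ) (D I : Finset ℕ) : ℕ := (nestedComponents n D I).card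

/-- `x` is the last element of one of the up intervals of `J`
(an element of `J ∩ U` whose successor in `U`, if any, is not in `J`). -/
def IsRunEnd (U J : Finset ℕ) (x : ℕ) : Prop :=
  x ∈ J ∧ x ∈ U ∧ ∀ y, ConsecIn U x y → y ∉ J

/-- `y` is the first element of one of the up intervals of `J`
(an element of `J ∩ U` whose predecessor in `U`, if any, is not in `J`). -/
def IsRunStart (U J : Finset ℕ) (y : ℕ) : Prop :=
  y ∈ J ∧ y ∈ U ∧ ∀ x, ConsecIn U x y → x ∉ J

/-- `{x,y}` is one of the diagonals `δ_1(J), …, δ_{w+1}(J)` associated to a nested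
set `J` with `a = a(J)`, `b = b(J)` and up intervals `[α_1,β_1]_U, …, [α_w,β_w]_U`,
namely `{a,α_1}, {β_1,α_2}, …, {β_w,b}` (and `{a,b}` when `w = 0`). -/
def AssocDiag (n : ℕ) (D U J : Finset ℕ) (x y : ℕ) : Prop :=
  x < y ∧ (x = aI D J ∨ IsRunEnd U J x) ∧ (y = bI n D J ∨ IsRunStart U J y) ∧
    ∀ u ∈ J ∩ U, ¬ (x < u ∧ u < y)

/-- `W(J)`: the proper diagonals among the diagonals associated to the nested set `J`. -/
noncomputable def WJ (n : ℕ) (D U J : Finset ℕ) : Finset (ℕ × ℕ) :=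
  (Finset.range (n + 2) ×ˢ Finset.range (n + 2)).filter fun p =>
    AssocDiag n D U J p.1 p.2 ∧ IsProper n D U p.1 p.2

/-- The tight value `z^c_I = ∑_i ( ∑_{j ∈ W(J_i)} w_{δ_j(J_i)} − (|W(J_i)|−1)·z_{[n]} )`,
the sum running over the nested components `J_i` of `I` (so `z^c_∅ = 0`). -/
noncomputable def zc (n : ℕ) (D U : Finset ℕ) (w : ℕ × ℕ → ℝ) (zn : ℝ) (I : Finset ℕ) : ℝ :=
  ∑ J ∈ nestedComponents n D I,
    ((∑ p ∈ WJ n D U J, w p) - (((WJ n D U J).card : ℝ) - 1) * zn)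

/-- The Minkowski coefficient `y_I = ∑_{J ⊆ I} (−1)^{|I∖J|} z^c_J`. -/
noncomputable def yI (n : ℕ) (D U : Finset ℕ) (w : ℕ × ℕ → ℝ) (zn : ℝ) (I : Finset ℕ) : ℝ :=
  ∑ J ∈ I.powerset, (-1 : ℝ) ^ (I \ J).card * zc n D U w zn J

/-- The associahedron right-hand sides `w_δ = |R_δ|·(|R_δ|+1)/2`. -/
noncomputable def wAs (n : ℕ) (D U : Finset ℕ) (p : ℕ × ℕ) : ℝ :=
  (((Rdiag n D U p.1 p.2).card : ℝ) * (((Rdiag n D U p.1 p.2).card : ℝ) + 1)) / 2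

/-- The associahedron value `z_{[n]} = n(n+1)/2`. -/
noncomputable def znAs (n : ℕ) : ℝ := ((n : ℝ) * ((n : ℝ) + 1)) / 2

/-! The non-proper diagonal `δ_3 = {γ, b(I)}` is a boundary edge, and only two kinds of boundary
edge can join `γ ≥ 1` to `b(I) ∈ D ∪ {n+1}`. Either `γ` and `b(I)` are consecutive in `D`, so that
`I` consists of `γ` and up elements below `b(I)`, which is (b) or (c); properness of
`δ_2 = {0, Γ}` rules out `Γ = u_1` when `γ = 1`. Or `b(I) = n+1` and `γ = u_m`; then `Γ = n`,
`I` is everything of `D` above `a(I)` together with `u_m`, and the successor `d'` of `u_m` in `D`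
is not `n`, since otherwise `δ_2 = {a(I), n}` would be a boundary edge: this is (a). -/

section Extremes

variable {n : ℕ} {D I : Finset ℕ}

lemma minEl_mem (h : I.Nonempty) : minEl I ∈ I := Nat.sInf_mem h

lemma minEl_le {i : ℕ} (hi : i ∈ I) : minEl I ≤ i := Nat.sInf_le hi

lemma maxEl_eq_max' (h : I.Nonempty) : maxEl I = I.max' h := (I.sup'_eq_sup h id).symm

lemma maxEl_mem (h : I.Nonempty) : maxEl I ∈ I := maxEl_eq_max' h ▸ I.max'_mem h

lemma le_maxEl {i : ℕ} (hi : i ∈ I) : i ≤ maxEl I := le_sup (f := id) hi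

lemma maxEl_eq_of_subset {J : Finset ℕ} (hJ : J ⊆ I) (hmax : maxEl I ∈ J) :
    maxEl J = maxEl I :=
  le_antisymm (sup_mono hJ) (le_maxEl hmax)

lemma aI_mem_filter (hI : ∀ i ∈ I, 0 < i) :
    aI D I ∈ (insert 0 D).filter fun e => ∀ i ∈ I, e < i := by
  have h0 : 0 ∈ (insert 0 D).filter fun e => ∀ i ∈ I, e < i :=
    mem_filter.mpr ⟨mem_insert_self 0 D, hI⟩
  obtain ⟨e, he, hsup⟩ := exists_mem_eq_sup _ ⟨0, h0⟩ id
  rw [aI, hsup]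
  exact he

lemma aI_mem (hI : ∀ i ∈ I, 0 < i) : aI D I ∈ insert 0 D :=
  (mem_filter.mp (aI_mem_filter hI)).1

lemma aI_lt (hI : ∀ i ∈ I, 0 < i) {i : ℕ} (hi : i ∈ I) : aI D I < i :=
  (mem_filter.mp (aI_mem_filter hI)).2 i hi

lemma le_aI {e : ℕ} (he : e ∈ insert 0 D) (h : ∀ i ∈ I, e < i) : e ≤ aI D I :=
  le_sup (f := id) (mem_filter.mpr ⟨he, h⟩)

lemma bI_mem_and_lt (hI : ∀ i ∈ I, i ≤ n) :
    bI n D I ∈ insert (n + 1) D ∧ ∀ i ∈ I, i < bI n D I :=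
  Nat.sInf_mem (s := {e | e ∈ insert (n + 1) D ∧ ∀ i ∈ I, i < e})
    ⟨n + 1, mem_insert_self _ _, fun i hi => Nat.lt_succ_of_le (hI i hi)⟩

lemma bI_mem (hI : ∀ i ∈ I, i ≤ n) : bI n D I ∈ insert (n + 1) D :=
  (bI_mem_and_lt hI).1

lemma lt_bI (hI : ∀ i ∈ I, i ≤ n) {i : ℕ} (hi : i ∈ I) : i < bI n D I :=
  (bI_mem_and_lt hI).2 i hi

lemma bI_le {e : ℕ} (he : e ∈ insert (n + 1) D) (h : ∀ i ∈ I, i < e) : bI n D I ≤ e :=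
  Nat.sInf_le ⟨he, h⟩

lemma bI_le_succ (hI : ∀ i ∈ I, i ≤ n) : bI n D I ≤ n + 1 :=
  bI_le (mem_insert_self _ _) fun i hi => Nat.lt_succ_of_le (hI i hi)

lemma maxEl_eq_of_bI_eq_succ (hnD : n ∈ D) (hne : I.Nonempty) (hI : ∀ i ∈ I, i ≤ n)
    (hb : bI n D I = n + 1) : maxEl I = n := by
  by_contra hΓ
  have hΓn : maxEl I < n := lt_of_le_of_ne (hI _ (maxEl_mem hne)) hΓ
  have : bI n D I ≤ n :=
    bI_le (mem_insert_of_mem hnD) fun i hi => (le_maxEl hi).trans_lt hΓn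
  omega

end Extremes

section Consecutive

variable {n x y : ℕ} {D : Finset ℕ}

lemma ConsecIn.mono {S T : Finset ℕ} (h : ConsecIn T x y) (hST : S ⊆ T) (hx : x ∈ S)
    (hy : y ∈ S) : ConsecIn S x y :=
  ⟨hx, hy, h.2.2.1, fun z hz => h.2.2.2 z (hST hz)⟩

lemma subset_dbar : D ⊆ Dbar n D := fun _ h => mem_insert_of_mem (mem_insert_of_mem h)

lemma ConsecIn.of_dbar (h : ConsecIn (Dbar n D) x y) (hx : 0 < x) (hxn : x < n)
    (hnD : n ∈ D) : ConsecIn D x y := by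
  obtain ⟨hxD, hyD, hxy, hgap⟩ := h
  have hx : x ∈ D := by
    simp only [Dbar, mem_insert] at hxD
    rcases hxD with rfl | rfl | hxD
    · omega
    · omega
    · exact hxD
  have hy : y ∈ D := by
    simp only [Dbar, mem_insert] at hyD
    rcases hyD with rfl | rfl | hyD
    · omega
    · exact absurd ⟨hxn, Nat.lt_succ_self n⟩ (hgap n (subset_dbar hnD))
    · exact hyD
  exact ConsecIn.mono ⟨hxD, hyD, hxy, hgap⟩ subset_dbar hx hy

lemma ConsecIn.dbar (h : ConsecIn D x y) (hy : y ≤ n) : ConsecIn (Dbar n D) x y := by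
  refine ⟨subset_dbar h.1, subset_dbar h.2.1, h.2.2.1, fun z hz => ?_⟩
  simp only [Dbar, mem_insert] at hz
  rcases hz with rfl | rfl | hz
  · omega
  · omega
  · exact h.2.2.2 z hz

lemma consecIn_of_gap {a d : ℕ} (ha : a ∈ D) (hd : d ∈ D) (hax : a < x) (hxd : x < d)
    (hx : x ∉ D) (hbelow : ∀ z ∈ D, z < x → z ≤ a) (habove : ∀ z ∈ D, x < z → d ≤ z) :
    ConsecIn D a d := by
  refine ⟨ha, hd, hax.trans hxd, fun z hz hazd => ?_⟩
  rcases lt_trichotomy z x with hzx | rfl | hxz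
  · exact absurd (hbelow z hz hzx) (by omega)
  · exact hx hz
  · exact absurd (habove z hz hxz) (by omega)

end Consecutive

section Boundary

variable {n x y : ℕ} {D U : Finset ℕ}

lemma not_isProper_of_consecIn_dbar (h : ConsecIn (Dbar n D) x y) : ¬ IsProper n D U x y :=
  fun hp => hp.2.2 (Or.inl h)

lemma not_isProper_zero_of_isLeast {u : ℕ} (hu : u ∈ U) (hmin : ∀ v ∈ U, u ≤ v) :
    ¬ IsProper n D U 0 u :=
  fun hp => hp.2.2 (Or.inr (Or.inl ⟨⟨u, hu⟩, Or.inl ⟨rfl, hu, hmin⟩⟩))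

end Boundary

section Partition

variable {n : ℕ} {D U I : Finset ℕ}

lemma eq_insert_filter_of_mem_D {c : ℕ} (hIDU : I ⊆ D ∪ U) (hc : c ∈ I)
    (hD : ∀ i ∈ I, i ∈ D → i = c) : I = insert c (I.filter (· ∈ U)) := by
  ext i
  refine ⟨fun hi => ?_, fun hi => ?_⟩
  · rcases mem_union.mp (hIDU hi) with hiD | hiU
    · exact hD i hi hiD ▸ mem_insert_self _ _
    · exact mem_insert_of_mem (mem_filter.mpr ⟨hi, hiU⟩)
  · rcases mem_insert.mp hi with rfl | hi
    · exact hc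
    · exact (mem_filter.mp hi).1

lemma bI_not_mem_U (hDU : D ∪ U = Icc 1 n) (hdisj : Disjoint D U) (hI : ∀ i ∈ I, i ≤ n) :
    bI n D I ∉ U := by
  intro hbU
  rcases mem_insert.mp (bI_mem (D := D) hI) with hb | hbD
  · have := (mem_Icc.mp (hDU ▸ mem_union_right D hbU)).2
    omega
  · exact disjoint_left.mp hdisj hbD hbU

lemma exists_eq_insert_of_consecIn (hDU : D ∪ U = Icc 1 n) (hdisj : Disjoint D U)
    (hne : I.Nonempty) (hsub : I ⊆ Icc 1 n) (hγΓ : minEl I < maxEl I)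
    (hc : ConsecIn D (minEl I) (bI n D I)) :
    ∃ M, M ⊆ U.filter (fun u => minEl I < u ∧ u < bI n D I) ∧ maxEl I ∈ M ∧
      maxEl M = maxEl I ∧ I = insert (minEl I) M := by
  have hIn : ∀ i ∈ I, i ≤ n := fun i hi => (mem_Icc.mp (hsub hi)).2
  have hD : ∀ i ∈ I, i ∈ D → i = minEl I := fun i hi hiD => by
    have := hc.2.2.2 i hiD
    have := minEl_le hi
    have := lt_bI (D := D) hIn hi
    omega
  have hIDU : I ⊆ D ∪ U := hDU ▸ hsub
  have hΓM : maxEl I ∈ I.filter (· ∈ U) := by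
    refine mem_filter.mpr ⟨maxEl_mem hne, ?_⟩
    rcases mem_union.mp (hIDU (maxEl_mem hne)) with hΓD | hΓU
    · exact absurd (hD _ (maxEl_mem hne) hΓD) hγΓ.ne'
    · exact hΓU
  refine ⟨I.filter (· ∈ U), fun u hu => ?_, hΓM, maxEl_eq_of_subset (filter_subset _ _) hΓM,
    eq_insert_filter_of_mem_D hIDU (minEl_mem hne) hD⟩
  obtain ⟨huI, huU⟩ := mem_filter.mp hu
  have hγu : minEl I ≠ u := fun h => disjoint_left.mp hdisj hc.1 (h ▸ huU)
  exact mem_filter.mpr ⟨huU, lt_of_le_of_ne (minEl_le huI) hγu, lt_bI hIn huI⟩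

lemma eq_filter_union_of_bI_eq_succ (hDU : D ∪ U = Icc 1 n) (hsub : I ⊆ Icc 1 n)
    (hnested : IsNested n D I) (hb : bI n D I = n + 1)
    (hγmax : ∀ u ∈ U, u ≤ minEl I) : I = D.filter (fun e => aI D I < e) ∪ {minEl I} := by
  have hI0 : ∀ i ∈ I, 0 < i := fun i hi => (mem_Icc.mp (hsub hi)).1
  ext i
  simp only [mem_union, mem_filter, mem_singleton]
  refine ⟨fun hi => ?_, fun hi => ?_⟩
  · rcases mem_union.mp (hDU ▸ hsub hi : i ∈ D ∪ U) with hiD | hiU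
    · exact Or.inl ⟨hiD, aI_lt hI0 hi⟩
    · exact Or.inr (le_antisymm (hγmax i hiU) (minEl_le hi))
  · rcases hi with ⟨hiD, hai⟩ | rfl
    · refine hnested.2.2 i hiD hai (hb ▸ Nat.lt_succ_of_le ?_)
      exact (mem_Icc.mp (hDU ▸ mem_union_left U hiD)).2
    · exact minEl_mem hnested.1

end Partition

section Cases

variable {n : ℕ} {D U I : Finset ℕ}

theorem caseB_or_caseC_of_consecIn (hDU : D ∪ U = Icc 1 n) (hdisj : Disjoint D U)
    (hne : I.Nonempty) (hsub : I ⊆ Icc 1 n) (hδ2 : IsProper n D U (aI D I) (maxEl I))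
    (hγΓ : minEl I < maxEl I) (hc : ConsecIn D (minEl I) (bI n D I)) :
    (∃ d d', ConsecIn D d d' ∧ 1 < d ∧ minEl I = d ∧ bI n D I = d' ∧
        ∃ M, M ⊆ U.filter (fun u => d < u ∧ u < d') ∧ M.Nonempty ∧ I = insert d M)
    ∨ (∃ d2, ConsecIn D 1 d2 ∧ minEl I = 1 ∧ bI n D I = d2 ∧
        ∃ M, M ⊆ U.filter (fun u => u < d2) ∧ M.Nonempty ∧ I = insert 1 M ∧
          ∀ u1 ∈ U, (∀ u ∈ U, u1 ≤ u) → u1 < maxEl M) := by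
  obtain ⟨M, hMU, hΓM, hmaxM, hI⟩ := exists_eq_insert_of_consecIn hDU hdisj hne hsub hγΓ hc
  have hγ1 : 1 ≤ minEl I := (mem_Icc.mp (hsub (minEl_mem hne))).1
  rcases Nat.lt_or_ge 1 (minEl I) with hγ | hγ
  · exact Or.inl ⟨_, _, hc, hγ, rfl, rfl, M, hMU, ⟨_, hΓM⟩, hI⟩
  obtain hγ1 : minEl I = 1 := by omega
  have ha0 : aI D I = 0 := by
    have := aI_lt (D := D) (fun i hi => (mem_Icc.mp (hsub hi)).1) (minEl_mem hne)
    omega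
  refine Or.inr ⟨_, hγ1 ▸ hc, hγ1, rfl, M, fun u hu => ?_, ⟨_, hΓM⟩, hγ1 ▸ hI,
    fun u1 hu1 hmin => ?_⟩
  · obtain ⟨huU, -, hub⟩ := mem_filter.mp (hMU hu)
    exact mem_filter.mpr ⟨huU, hub⟩
  · have hΓU : maxEl I ∈ U := (mem_filter.mp (hMU hΓM)).1
    rw [hmaxM]
    refine lt_of_le_of_ne (hmin _ hΓU) fun hu1Γ => ?_
    rw [ha0, ← hu1Γ] at hδ2
    exact not_isProper_zero_of_isLeast hu1 hmin hδ2

theorem caseA_of_isGreatest (hDU : D ∪ U = Icc 1 n) (hdisj : Disjoint D U) (h1D : 1 ∈ D)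
    (hnD : n ∈ D) (hsub : I ⊆ Icc 1 n) (hnested : IsNested n D I)
    (hδ2 : IsProper n D U (aI D I) (maxEl I)) (hγΓ : minEl I < maxEl I)
    (hb : bI n D I = n + 1) (hγU : minEl I ∈ U) (hγmax : ∀ u ∈ U, u ≤ minEl I) :
    ∃ d d' um, ConsecIn D d d' ∧ d' < n ∧ um ∈ U ∧ (∀ u ∈ U, u ≤ um) ∧
        d < um ∧ um < d' ∧ I = D.filter (fun e => d < e) ∪ {um} := by
  have hI0 : ∀ i ∈ I, 0 < i := fun i hi => (mem_Icc.mp (hsub hi)).1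
  have hDn : ∀ d ∈ D, d ≤ n := fun d hd => (mem_Icc.mp (hDU ▸ mem_union_left U hd)).2
  have hΓ : maxEl I = n :=
    maxEl_eq_of_bI_eq_succ hnD hnested.1 (fun i hi => (mem_Icc.mp (hsub hi)).2) hb
  have hγD : minEl I ∉ D := fun h => disjoint_left.mp hdisj h hγU
  have hbelow : ∀ z ∈ D, z < minEl I → z ≤ aI D I := fun z hz hzγ =>
    le_aI (mem_insert_of_mem hz) fun i hi => hzγ.trans_le (minEl_le hi)
  have haD : aI D I ∈ D := by
    have h1γ : 1 < minEl I := lt_of_le_of_ne (hI0 _ (minEl_mem hnested.1))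
      fun h => hγD (h ▸ h1D)
    rcases mem_insert.mp (aI_mem (D := D) hI0) with ha | ha
    · exact absurd (hbelow 1 h1D h1γ) (by omega)
    · exact ha
  have hsucc : (D.filter (minEl I < ·)).Nonempty := ⟨n, mem_filter.mpr ⟨hnD, hΓ ▸ hγΓ⟩⟩
  set d' := (D.filter (minEl I < ·)).min' hsucc
  obtain ⟨hd'D, hγd'⟩ := mem_filter.mp ((D.filter (minEl I < ·)).min'_mem hsucc)
  have hcons : ConsecIn D (aI D I) d' :=
    consecIn_of_gap haD hd'D (aI_lt hI0 (minEl_mem hnested.1)) hγd' hγD hbelow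
      fun z hz hγz => min'_le _ _ (mem_filter.mpr ⟨hz, hγz⟩)
  have hd'n : d' < n := by
    refine lt_of_le_of_ne (hDn d' hd'D) fun hd' => ?_
    rw [hΓ.trans hd'.symm] at hδ2
    exact not_isProper_of_consecIn_dbar (hcons.dbar (hDn d' hd'D)) hδ2
  exact ⟨_, d', _, hcons, hd'n, hγU, hγmax, aI_lt hI0 (minEl_mem hnested.1), hγd',
    eq_filter_union_of_bI_eq_succ hDU hsub hnested hb hγmax⟩

end Cases

theorem statement18_general (n : ℕ) (D U : Finset ℕ)
    (hDU : D ∪ U = Finset.Icc 1 n) (hdisj : Disjoint D U) (h1D : 1 ∈ D) (hnD : n ∈ D)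
    (I : Finset ℕ) (hne : I.Nonempty) (hsub : I ⊆ Finset.Icc 1 n)
    (hnested : IsNested n D I)
    (h2 : IsProper n D U (aI D I) (maxEl I))
    (h3 : ¬ IsProper n D U (minEl I) (bI n D I))
    (h4 : IsProper n D U (minEl I) (maxEl I)) :
    (∃ d d' um, ConsecIn D d d' ∧ d' < n ∧ um ∈ U ∧ (∀ u ∈ U, u ≤ um) ∧
        d < um ∧ um < d' ∧ I = D.filter (fun e => d < e) ∪ {um})
    ∨ (∃ d d', ConsecIn D d d' ∧ 1 < d ∧ minEl I = d ∧ bI n D I = d' ∧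
        ∃ M, M ⊆ U.filter (fun u => d < u ∧ u < d') ∧ M.Nonempty ∧ I = insert d M)
    ∨ (∃ d2, ConsecIn D 1 d2 ∧ minEl I = 1 ∧ bI n D I = d2 ∧
        ∃ M, M ⊆ U.filter (fun u => u < d2) ∧ M.Nonempty ∧ I = insert 1 M ∧
          ∀ u1 ∈ U, (∀ u ∈ U, u1 ≤ u) → u1 < maxEl M) := by
  have hIn : ∀ i ∈ I, i ≤ n := fun i hi => (mem_Icc.mp (hsub hi)).2
  have hγ : 0 < minEl I := (mem_Icc.mp (hsub (minEl_mem hne))).1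
  have hΓ : maxEl I ≤ n := hIn _ (maxEl_mem hne)
  have hδ3 : IsBoundary n D U (minEl I) (bI n D I) := by
    by_contra hB
    exact h3 ⟨lt_bI hIn (minEl_mem hne), bI_le_succ hIn, hB⟩
  rcases hδ3 with hc | ⟨-, ⟨hγ0, -⟩ | ⟨hb, hγU, hγmax⟩ | hcU⟩ | ⟨-, hγ0, -⟩
  · exact Or.inr (caseB_or_caseC_of_consecIn hDU hdisj hne hsub h2 h4.1
      (hc.of_dbar hγ (h4.1.trans_le hΓ) hnD))
  · omega
  · exact Or.inl (caseA_of_isGreatest hDU hdisj h1D hnD hsub hnested h2 h4.1 hb hγU hγmax)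
  · exact absurd hcU.2.1 (bI_not_mem_U hDU hdisj hIn)
  · omega

/-- for `n ≥ 3` and a nonempty proper nested `I ⊆ [n]`, if among
`δ_1, δ_2, δ_3, δ_4` exactly `δ_1`, `δ_2` and `δ_4` are proper, then one of:
(a) there are consecutive `d < d'` in `D` with `d' < n` (i.e. `1 ≤ r ≤ ℓ−2`),
`d < u_m < d'` and `I = {e ∈ D : e > d} ∪ {u_m}`;
(b) there are consecutive `d < d'` in `D` with `1 < d`, `γ = d`, `b(I) = d'` and
`I = {d} ∪ M` for nonempty `M ⊆ {u ∈ U : d < u < d'}`;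
(c) `γ = 1`, `b(I) = d_2` (the successor of `1` in `D`) and `I = {1} ∪ M` for
nonempty `M ⊆ {u ∈ U : u < d_2}` with `u_1 < max M`. -/
theorem statement18 (n : ℕ) (D U : Finset ℕ) (hn : 3 ≤ n)
    (hDU : D ∪ U = Finset.Icc 1 n) (hdisj : Disjoint D U) (h1D : 1 ∈ D) (hnD : n ∈ D)
    (I : Finset ℕ) (hne : I.Nonempty) (hsub : I ⊆ Finset.Icc 1 n)
    (hpropersub : I ≠ Finset.Icc 1 n) (hnested : IsNested n D I)
    (h1 : IsProper n D U (aI D I) (bI n D I))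
    (h2 : IsProper n D U (aI D I) (maxEl I))
    (h3 : ¬ IsProper n D U (minEl I) (bI n D I))
    (h4 : IsProper n D U (minEl I) (maxEl I)) :
    (∃ d d' um, ConsecIn D d d' ∧ d' < n ∧ um ∈ U ∧ (∀ u ∈ U, u ≤ um) ∧
        d < um ∧ um < d' ∧ I = D.filter (fun e => d < e) ∪ {um})
    ∨ (∃ d d', ConsecIn D d d' ∧ 1 < d ∧ minEl I = d ∧ bI n D I = d' ∧
        ∃ M, M ⊆ U.filter (fun u => d < u ∧ u < d') ∧ M.Nonempty ∧ I = insert d M)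
    ∨ (∃ d2, ConsecIn D 1 d2 ∧ minEl I = 1 ∧ bI n D I = d2 ∧
        ∃ M, M ⊆ U.filter (fun u => u < d2) ∧ M.Nonempty ∧ I = insert 1 M ∧
          ∀ u1 ∈ U, (∀ u ∈ U, u1 ≤ u) → u1 < maxEl M) :=
  statement18_general n D U hDU hdisj h1D hnD I hne hsub hnested h2 h3 h4

end AssocPaper
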